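/- arXiv:1805.02263 — 4 statements merged into one kernel-verified Lean document; each statement's English description precedes it below -/
import Mathlib

section
/- Let ϑ ∈ (0, π/6) and ρ₀ ∈ (0, 1). Define the region A = {w − t·e^{−iϑ} : w ∈ R, t ≥ 0}, where R = {x + iy : |x − 2| ≤ ρ₀/4, |y| ≤ (sin ϑ)·ρ₀/4} is a rectangle centered at 2. Then for every z ∈ A and every real r ≥ ρ₀, both |2 + r·e^{−iϑ} − z| ≥ (sin(ϑ)/4)·(r + ρ₀) and |r·e^{−iϑ} − z| ≥ (sin(ϑ)/4)·(r + ρ₀) hold. -/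
open Real Complex

/-!
All points `c + r e^{-iϑ}` with `c` real and `r ≥ ρ₀` lie on or below the line
`Im = -ρ₀ sin ϑ`, while moving a point of the rectangle along `-e^{-iϑ}` only raises its
imaginary part, so the region `A` lies above `Im = -ρ₀ sin ϑ / 4`. The gap between the
imaginary parts, `r sin ϑ - ρ₀ sin ϑ / 4 ≥ (r + ρ₀) sin ϑ / 4`, already bounds the distance.
-/

lemma Complex.exp_neg_ofReal_mul_I_im (ϑ : ℝ) : (exp (-(ϑ * I))).im = -Real.sin ϑ := by
  rw [show -((ϑ : ℂ) * I) = ((-ϑ : ℝ) : ℂ) * I by push_cast; ring, exp_ofReal_mul_I_im,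
    Real.sin_neg]

lemma Complex.im_ofReal_add_mul_exp_neg (c r ϑ : ℝ) :
    ((c : ℂ) + r * exp (-(ϑ * I))).im = -(r * Real.sin ϑ) := by
  simp [exp_neg_ofReal_mul_I_im]

lemma Complex.im_le_im_sub_mul_exp_neg {ϑ t : ℝ} (hϑ : 0 ≤ Real.sin ϑ) (ht : 0 ≤ t) (w : ℂ) :
    w.im ≤ (w - t * exp (-(ϑ * I))).im := by
  simpa [exp_neg_ofReal_mul_I_im] using mul_nonneg ht hϑ

lemma Complex.sin_mul_add_le_norm_sub {ϑ ρ₀ r : ℝ} (hϑ : 0 ≤ Real.sin ϑ) (hρ₀ : 0 ≤ ρ₀)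
    (hr : ρ₀ ≤ r) {p z : ℂ} (hp : p.im = -(r * Real.sin ϑ))
    (hz : -(Real.sin ϑ * ρ₀ / 4) ≤ z.im) :
    Real.sin ϑ / 4 * (r + ρ₀) ≤ ‖p - z‖ :=
  calc Real.sin ϑ / 4 * (r + ρ₀)
      ≤ r * Real.sin ϑ - Real.sin ϑ * ρ₀ / 4 := by nlinarith
    _ ≤ z.im - p.im := by linarith
    _ ≤ |(p - z).im| := by rw [sub_im, abs_sub_comm]; exact le_abs_self _
    _ ≤ ‖p - z‖ := abs_im_le_norm _

/-- Key geometric estimate (3.15)–(3.17) in the proof of Lemma 3.4: for spectral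
parameters `z` in the swept region `A` and `r ≥ ρ₀`, the distances to the points
`2 + e^{-iϑ}r` and `e^{-iϑ}r` of the cut spectrum are at least `(sin ϑ/4)(r + ρ₀)`. -/
theorem geometric_estimate_induction_basis
    (ϑ : ℝ) (hϑ : ϑ ∈ Set.Ioo 0 (π / 6))
    (ρ₀ : ℝ) (hρ₀ : ρ₀ ∈ Set.Ioo (0 : ℝ) 1)
    (z : ℂ)
    (hz : ∃ w : ℂ, (|w.re - 2| ≤ ρ₀ / 4 ∧ |w.im| ≤ Real.sin ϑ * ρ₀ / 4) ∧
      ∃ t : ℝ, 0 ≤ t ∧ z = w - t * Complex.exp (-(ϑ * Complex.I)))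
    (r : ℝ) (hr : ρ₀ ≤ r) :
    Real.sin ϑ / 4 * (r + ρ₀) ≤
        ‖2 + r * Complex.exp (-(ϑ * Complex.I)) - z‖ ∧
    Real.sin ϑ / 4 * (r + ρ₀) ≤
        ‖r * Complex.exp (-(ϑ * Complex.I)) - z‖ := by
  obtain ⟨w, ⟨-, hw⟩, t, ht, rfl⟩ := hz
  have hsin : 0 ≤ Real.sin ϑ :=
    sin_nonneg_of_nonneg_of_le_pi hϑ.1.le (by linarith [hϑ.2, pi_pos])
  have hz_im : -(Real.sin ϑ * ρ₀ / 4) ≤ (w - t * exp (-(ϑ * I))).im :=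
    (neg_le_of_abs_le hw).trans (im_le_im_sub_mul_exp_neg hsin ht w)
  constructor
  · exact sin_mul_add_le_norm_sub hsin hρ₀.1.le hr
      (by exact_mod_cast im_ofReal_add_mul_exp_neg 2 r ϑ) hz_im
  · exact sin_mul_add_le_norm_sub hsin hρ₀.1.le hr
      (by simpa using im_ofReal_add_mul_exp_neg 0 r ϑ) hz_im
end

section
/- Let ϑ ∈ (0, π/6) and ρ₀ ∈ (0, 1). Define the region A = {w − t·e^{−iϑ} : w ∈ R, t ≥ 0}, where R = {x + iy : |x − 2| ≤ ρ₀/4, |y| ≤ (sin ϑ)·ρ₀/4} is a rectangle centered at 2. Then every z ∈ A satisfies |z| ≥ sin(ϑ); that is, the distance from the origin to A is at least sin(ϑ). -/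
/-!
Project onto the unit vector `v = i e^{-iϑ}`, which is orthogonal to the sweeping direction
`e^{-iϑ}`. The projection `Re (z v̄)` is therefore the same for `z = w - t e^{-iϑ}` as for the
rectangle point `w`, where it equals `w.re sin ϑ + w.im cos ϑ ≥ (2 - ρ₀/2) sin ϑ ≥ sin ϑ`;
and it is at most `‖z‖` because `‖v‖ = 1`.
-/

open Real Complex ComplexConjugate

namespace Complex

theorem re_mul_conj_le_norm_of_norm_eq_one {v : ℂ} (hv : ‖v‖ = 1) (z : ℂ) :
    (z * conj v).re ≤ ‖z‖ := by
  simpa [hv] using re_le_norm (z * conj v)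

theorem re_ofReal_mul_mul_conj_I_mul (t : ℝ) (u : ℂ) : (t * u * conj (I * u)).re = 0 := by
  simp only [map_mul, conj_I, mul_re, mul_im, ofReal_re, ofReal_im, conj_re, conj_im, neg_re,
    neg_im, I_re, I_im]
  ring

theorem re_sub_ofReal_mul_mul_conj_I_mul (w : ℂ) (t : ℝ) (u : ℂ) :
    ((w - t * u) * conj (I * u)).re = (w * conj (I * u)).re := by
  rw [sub_mul, sub_re, re_ofReal_mul_mul_conj_I_mul, sub_zero]

theorem re_mul_conj_I_mul_exp_neg (w : ℂ) (ϑ : ℝ) :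
    (w * conj (I * exp (-(ϑ * I)))).re = w.re * Real.sin ϑ + w.im * Real.cos ϑ := by
  rw [← neg_mul, ← ofReal_neg, exp_mul_I, ← ofReal_cos, ← ofReal_sin]
  simp only [Real.cos_neg, Real.sin_neg, map_mul, map_add, conj_I, conj_ofReal, mul_re, mul_im,
    add_re, add_im, neg_re, neg_im, ofReal_re, ofReal_im, I_re, I_im]
  ring

end Complex

theorem mul_le_re_mul_add_im_mul_of_mem_rectangle {w : ℂ} {s c ρ : ℝ} (hs : 0 ≤ s) (hc₀ : 0 ≤ c)
    (hc₁ : c ≤ 1) (hρ₀ : 0 ≤ ρ) (hρ₁ : ρ ≤ 2) (hre : |w.re - 2| ≤ ρ / 4)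
    (him : |w.im| ≤ s * ρ / 4) : s ≤ w.re * s + w.im * c := by
  have hre' : 2 - ρ / 4 ≤ w.re := by linarith [(abs_le.mp hre).1]
  have him' : -(s * ρ / 4) ≤ w.im := by linarith [(abs_le.mp him).1]
  have hsρ : 0 ≤ s * ρ := mul_nonneg hs hρ₀
  nlinarith [mul_le_mul_of_nonneg_left hre' hs, mul_le_mul_of_nonneg_right him' hc₀,
    mul_le_of_le_one_left hsρ hc₁]

/-- Estimate dist(0, Ã_n) ≥ sin ϑ (equation (3.129)): every point of the swept
region `A` has absolute value at least `sin ϑ`. -/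
theorem dist_origin_to_region
    (ϑ : ℝ) (hϑ : ϑ ∈ Set.Ioo 0 (π / 6))
    (ρ₀ : ℝ) (hρ₀ : ρ₀ ∈ Set.Ioo (0 : ℝ) 1)
    (z : ℂ)
    (hz : ∃ w : ℂ, (|w.re - 2| ≤ ρ₀ / 4 ∧ |w.im| ≤ Real.sin ϑ * ρ₀ / 4) ∧
      ∃ t : ℝ, 0 ≤ t ∧ z = w - t * Complex.exp (-(ϑ * Complex.I))) :
    Real.sin ϑ ≤ ‖z‖ := by
  obtain ⟨w, ⟨hre, him⟩, t, -, rfl⟩ := hz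
  have hπ := Real.pi_pos
  have hsin : 0 ≤ Real.sin ϑ := sin_nonneg_of_nonneg_of_le_pi hϑ.1.le (by linarith [hϑ.2])
  have hcos : 0 ≤ Real.cos ϑ := cos_nonneg_of_mem_Icc ⟨by linarith [hϑ.1], by linarith [hϑ.2]⟩
  have hv : ‖I * exp (-(ϑ * I))‖ = 1 := by
    rw [norm_mul, norm_I, ← neg_mul, ← ofReal_neg, norm_exp_ofReal_mul_I, one_mul]
  calc Real.sin ϑ ≤ w.re * Real.sin ϑ + w.im * Real.cos ϑ :=
        mul_le_re_mul_add_im_mul_of_mem_rectangle hsin hcos (cos_le_one ϑ) hρ₀.1.le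
          (by linarith [hρ₀.2]) hre him
    _ = ((w - t * exp (-(ϑ * I))) * conj (I * exp (-(ϑ * I)))).re := by
        rw [re_sub_ofReal_mul_mul_conj_I_mul, re_mul_conj_I_mul_exp_neg]
    _ ≤ ‖w - t * exp (-(ϑ * I))‖ := re_mul_conj_le_norm_of_norm_eq_one hv _
end

section
/- Let ϑ ∈ (0, π/2), ρ > 0, and let w ∈ ℂ satisfy Im(w) ≥ −(sin(ϑ)/2)·ρ. Then for every real r ≥ ρ, |w − r·e^{−iϑ}| ≥ (sin(ϑ)/4)·(r + ρ). -/
open Real Complex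

/-! The distance is at least the imaginary part `Im w + r sin ϑ ≥ sin ϑ (r - ρ/2)`,
and `r - ρ/2 ≥ (r + ρ)/4` as soon as `r ≥ ρ`. -/

theorem Complex.im_sub_ofReal_mul_exp_neg_mul_I (w : ℂ) (r θ : ℝ) :
    (w - r * exp (-(θ * I))).im = w.im + r * Real.sin θ := by
  simp [exp_im, ← ofReal_neg, ← neg_mul, sub_eq_add_neg]

theorem geometric_estimate_neumann_general
    (ϑ : ℝ) (hϑ : ϑ ∈ Set.Ioo 0 (π / 2))
    (ρ : ℝ)
    (w : ℂ) (hw : -(Real.sin ϑ / 2) * ρ ≤ w.im)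
    (r : ℝ) (hr : ρ ≤ r) :
    Real.sin ϑ / 4 * (r + ρ) ≤
      ‖w - r * Complex.exp (-(ϑ * Complex.I))‖ := by
  have hsin : 0 ≤ Real.sin ϑ :=
    Real.sin_nonneg_of_nonneg_of_le_pi hϑ.1.le (by linarith [hϑ.2, Real.pi_pos])
  calc Real.sin ϑ / 4 * (r + ρ)
      ≤ w.im + r * Real.sin ϑ := by nlinarith [mul_nonneg hsin (sub_nonneg.2 hr)]
    _ = (w - r * Complex.exp (-(ϑ * Complex.I))).im :=
        (Complex.im_sub_ofReal_mul_exp_neg_mul_I w r ϑ).symm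
    _ ≤ ‖w - r * Complex.exp (-(ϑ * Complex.I))‖ := Complex.im_le_norm _

/-- Geometric estimate (3.106) in the proof of Lemma 3.11: if `Im w ≥ -(sin ϑ/2)ρ`,
then the distance from `w` to any point `r·e^{-iϑ}` of the shifted ray with `r ≥ ρ`
is at least `(sin ϑ/4)(r + ρ)`. -/
theorem geometric_estimate_neumann
    (ϑ : ℝ) (hϑ : ϑ ∈ Set.Ioo 0 (π / 2))
    (ρ : ℝ) (hρ : 0 < ρ)
    (w : ℂ) (hw : -(Real.sin ϑ / 2) * ρ ≤ w.im)
    (r : ℝ) (hr : ρ ≤ r) :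
    Real.sin ϑ / 4 * (r + ρ) ≤
      ‖w - r * Complex.exp (-(ϑ * Complex.I))‖ :=
  geometric_estimate_neumann_general ϑ hϑ ρ w hw r hr
end

section
/- Let ϑ ∈ (0, π/2), ρ > 0, and let w ∈ ℂ satisfy Im(w) ≥ −(sin(ϑ)/2)·ρ. Then for every real r ≥ ρ, |r·e^{−iϑ} − w| ≥ (sin(ϑ)/4)·((sin(ϑ)/2)·ρ + |w|); equivalently, 1/|r·e^{−iϑ} − w| ≤ (4/sin(ϑ))·1/((sin(ϑ)/2)·ρ + |w|). -/
open Real Complex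

/-!
Write `u = r e^{-iϑ}`, `s = sin ϑ` and `M = |u - w|`. Since `Im u = -r s`, the imaginary part of
`u - w` gives `M ≥ r s + Im w ≥ r s - s ρ / 2 ≥ r s / 2 ≥ s ρ / 2`, and the triangle inequality gives
`|w| ≤ M + r`. Hence `(s/4)(s ρ / 2 + |w|) ≤ s ρ / 8 + s M / 4 + s r / 4 ≤ M/4 + M/4 + M/2 = M`.
-/

theorem Complex.sin_div_four_mul_le_norm_ofReal_mul_exp_neg_mul_I_sub {ϑ ρ r : ℝ} {w : ℂ}
    (hs : 0 ≤ Real.sin ϑ) (hρ : 0 ≤ ρ) (hw : -(Real.sin ϑ / 2) * ρ ≤ w.im) (hr : ρ ≤ r) :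
    Real.sin ϑ / 4 * (Real.sin ϑ / 2 * ρ + ‖w‖) ≤ ‖(r : ℂ) * exp (-(ϑ * I)) - w‖ := by
  set u : ℂ := r * exp (-(ϑ * I))
  have hu_im : u.im = -(r * Real.sin ϑ) := by simp [u, mul_im, exp_im]
  have hu_norm : ‖u‖ = r := by simp [u, norm_exp, abs_of_nonneg (hρ.trans hr)]
  have h_im : r * Real.sin ϑ + w.im ≤ ‖u - w‖ := by
    have := neg_le_of_abs_le (abs_im_le_norm (u - w))
    rw [sub_im, hu_im] at this
    linarith
  have h_tri : ‖w‖ ≤ ‖u - w‖ + r := by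
    simpa only [norm_sub_rev w u, hu_norm] using norm_le_norm_sub_add w u
  have h_sρ : Real.sin ϑ * ρ ≤ Real.sin ϑ * r := mul_le_mul_of_nonneg_left hr hs
  have h_sr : Real.sin ϑ * r ≤ 2 * ‖u - w‖ := by linarith
  have h_ssρ : Real.sin ϑ * (Real.sin ϑ * ρ) ≤ Real.sin ϑ * ρ :=
    mul_le_of_le_one_left (mul_nonneg hs hρ) (Real.sin_le_one ϑ)
  have h_sM : Real.sin ϑ * ‖u - w‖ ≤ ‖u - w‖ :=
    mul_le_of_le_one_left (norm_nonneg _) (Real.sin_le_one ϑ)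
  have h_sw : Real.sin ϑ * ‖w‖ ≤ Real.sin ϑ * (‖u - w‖ + r) := mul_le_mul_of_nonneg_left h_tri hs
  linarith

theorem one_div_le_one_div_mul_one_div_of_mul_le {c D M : ℝ} (hc : 0 < c) (hD : 0 < D)
    (h : c * D ≤ M) : 1 / M ≤ 1 / c * (1 / D) := by
  rw [one_div_mul_one_div]
  exact one_div_le_one_div_of_le (mul_pos hc hD) h

/-- Geometric core of Lemma 3.7 (equation (3.53)): for `w` with
`Im w ≥ -(sin ϑ/2)ρ` and `r ≥ ρ`, the distance from `w` to the shifted ray point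
`r·e^{-iϑ}` is bounded below by `(sin ϑ/4)·((sin ϑ/2)ρ + |w|)`; equivalently the
reciprocal is bounded by `(4/sin ϑ)/((sin ϑ/2)ρ + |w|)`. -/
theorem geometric_core_invertibility_tilde
    (ϑ : ℝ) (hϑ : ϑ ∈ Set.Ioo 0 (π / 2))
    (ρ : ℝ) (hρ : 0 < ρ)
    (w : ℂ) (hw : -(Real.sin ϑ / 2) * ρ ≤ w.im)
    (r : ℝ) (hr : ρ ≤ r) :
    Real.sin ϑ / 4 * (Real.sin ϑ / 2 * ρ + ‖w‖) ≤
        ‖(r * Complex.exp (-(ϑ * Complex.I)) - w)‖ ∧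
    1 / ‖(r * Complex.exp (-(ϑ * Complex.I)) - w)‖ ≤
        4 / Real.sin ϑ * (1 / (Real.sin ϑ / 2 * ρ + ‖w‖)) := by
  have hs : 0 < Real.sin ϑ :=
    Real.sin_pos_of_pos_of_lt_pi hϑ.1 (hϑ.2.trans (half_lt_self Real.pi_pos))
  have h_dist := sin_div_four_mul_le_norm_ofReal_mul_exp_neg_mul_I_sub hs.le hρ.le hw hr
  refine ⟨h_dist, ?_⟩
  rw [← one_div_div (Real.sin ϑ) 4]
  exact one_div_le_one_div_mul_one_div_of_mul_le (by positivity) (by positivity) h_dist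
end
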